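/- arXiv:2306.03245 — 6 statements merged into one kernel-verified Lean document; each statement's English description precedes it below -/
import Mathlib

section
/- (First shifting property of the CDLST.) Let 0 < η, γ ≤ 1, let g : (0,∞) × (0,∞) → ℝ be measurable, let c, d, v ∈ ℝ and let ω > 0 satisfy d·ω < 1, and set ω' = ω/(1 − d·ω). Then (1/ω)·∫₀^∞∫₀^∞ e^{−v·x^η/η − (1/ω)·y^γ/γ} · e^{c·x^η/η + d·y^γ/γ} · g(x,y) · x^{η−1}·y^{γ−1} dx dy = (1/(1 − d·ω)) · [ (1/ω')·∫₀^∞∫₀^∞ e^{−(v−c)·x^η/η − (1/ω')·y^γ/γ} · g(x,y) · x^{η−1}·y^{γ−1} dx dy ]; in other words, the CDLST of e^{c x^η/η + d y^γ/γ}·ψ at (v,ω) equals (1/(1−dω))·Ψ(v−c, ω/(1−dω)), where Ψ is the CDLST of ψ. -/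
open Real MeasureTheory Set

/-- Theorem 7(5), first shifting property: the CDLST of
e^(c x^η/η + d y^γ/γ)·ψ at (v, ω) equals (1/(1 - dω))·Ψ(v - c, ω/(1 - dω)). -/
theorem cdlst_first_shifting
    (η γ : ℝ) (hη0 : 0 < η) (hη1 : η ≤ 1) (hγ0 : 0 < γ) (hγ1 : γ ≤ 1)
    (g : ℝ → ℝ → ℝ) (hg : Measurable (Function.uncurry g))
    (c d v : ℝ) (ω : ℝ) (hω : 0 < ω) (hdω : d * ω < 1)
    (ω' : ℝ) (hω' : ω' = ω / (1 - d * ω)) :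
    (1 / ω) * ∫ p in Ioi (0 : ℝ) ×ˢ Ioi (0 : ℝ),
        Real.exp (-v * p.1 ^ η / η - (1 / ω) * p.2 ^ γ / γ)
          * Real.exp (c * p.1 ^ η / η + d * p.2 ^ γ / γ)
          * g p.1 p.2 * p.1 ^ (η - 1) * p.2 ^ (γ - 1)
      = (1 / (1 - d * ω)) *
        ((1 / ω') * ∫ p in Ioi (0 : ℝ) ×ˢ Ioi (0 : ℝ),
          Real.exp (-(v - c) * p.1 ^ η / η - (1 / ω') * p.2 ^ γ / γ)
            * g p.1 p.2 * p.1 ^ (η - 1) * p.2 ^ (γ - 1)) := by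
  have h1 : 0 < 1 - d * ω := by linarith
  have hω'pos : 0 < ω' := by rw [hω']; positivity
  have hinv : 1 / ω' = 1 / ω - d := by
    rw [hω']; field_simp
  have hint : (∫ p in Ioi (0 : ℝ) ×ˢ Ioi (0 : ℝ),
          Real.exp (-(v - c) * p.1 ^ η / η - (1 / ω') * p.2 ^ γ / γ)
            * g p.1 p.2 * p.1 ^ (η - 1) * p.2 ^ (γ - 1))
      = ∫ p in Ioi (0 : ℝ) ×ˢ Ioi (0 : ℝ),
        Real.exp (-v * p.1 ^ η / η - (1 / ω) * p.2 ^ γ / γ)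
          * Real.exp (c * p.1 ^ η / η + d * p.2 ^ γ / γ)
          * g p.1 p.2 * p.1 ^ (η - 1) * p.2 ^ (γ - 1) := by
    refine integral_congr_ae (Filter.Eventually.of_forall fun p => ?_)
    dsimp only
    rw [← Real.exp_add]
    have : -(v - c) * p.1 ^ η / η - (1 / ω') * p.2 ^ γ / γ
        = -v * p.1 ^ η / η - (1 / ω) * p.2 ^ γ / γ
          + (c * p.1 ^ η / η + d * p.2 ^ γ / γ) := by
      rw [hinv]; ring
    rw [this]
  rw [hint]
  rw [← mul_assoc]
  congr 1
  rw [hω']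
  field_simp
  exact (div_self (ne_of_gt (by linarith))).symm
end

section
/- (Second shifting property of the CDLST.) Let 0 < η, γ ≤ 1, let v > 0, ω > 0, let δ, ε > 0, and let F : ℝ × ℝ → ℝ be measurable with F(X,Y) = 0 whenever X < 0 or Y < 0. Assume the function (x,y) ↦ e^{−v·x^η/η − (1/ω)·y^γ/γ}·F(x^η/η, y^γ/γ)·x^{η−1}·y^{γ−1} is Lebesgue integrable on (0,∞)². Then (1/ω)·∫₀^∞∫₀^∞ e^{−v·x^η/η − (1/ω)·y^γ/γ} · F(x^η/η − δ^η/η, y^γ/γ − ε^γ/γ) · H(x^η/η − δ^η/η, y^γ/γ − ε^γ/γ) · x^{η−1}·y^{γ−1} dx dy = e^{−v·δ^η/η − (1/ω)·ε^γ/γ} · [ (1/ω)·∫₀^∞∫₀^∞ e^{−v·x^η/η − (1/ω)·y^γ/γ} · F(x^η/η, y^γ/γ) · x^{η−1}·y^{γ−1} dx dy ], where H(A,B) = 1 if A > 0 and B > 0, and H(A,B) = 0 otherwise. -/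
open Real MeasureTheory Set

/-- The two-variable Heaviside (indicator) function: H(A,B) = 1 if A > 0 and B > 0,
and 0 otherwise. -/
noncomputable def Heaviside2 (A B : ℝ) : ℝ := if 0 < A ∧ 0 < B then 1 else 0

private lemma cdlst_det_aux (d e : ℝ) :
    ((d • ContinuousLinearMap.fst ℝ ℝ ℝ).prod (e • ContinuousLinearMap.snd ℝ ℝ ℝ)).det = d * e := by
  rw [ContinuousLinearMap.det, ← LinearMap.det_toMatrix (Module.Basis.finTwoProd ℝ), Matrix.det_fin_two]
  simp [LinearMap.toMatrix_apply, Module.Basis.coe_finTwoProd_repr, Module.Basis.finTwoProd_zero,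
    Module.Basis.finTwoProd_one]

/-- Conformable change of variables: the CDLST-type integral over the first quadrant with
weights `x^(η-1) y^(γ-1)` reduces to an ordinary double integral via `(x, y) ↦ (x^η/η, y^γ/γ)`. -/
private lemma cdlst_cov_aux (η γ : ℝ) (hη0 : 0 < η) (hγ0 : 0 < γ) (g : ℝ × ℝ → ℝ) :
    ∫ p in Ioi (0:ℝ) ×ˢ Ioi (0:ℝ), (p.1 ^ (η-1) * p.2 ^ (γ-1)) * g (p.1^η/η, p.2^γ/γ)
      = ∫ p in Ioi (0:ℝ) ×ˢ Ioi (0:ℝ), g p := by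
  set s : Set (ℝ × ℝ) := Ioi (0:ℝ) ×ˢ Ioi (0:ℝ) with hsdef
  have hs : MeasurableSet s := measurableSet_Ioi.prod measurableSet_Ioi
  set T : ℝ × ℝ → ℝ × ℝ := fun p => (p.1 ^ η / η, p.2 ^ γ / γ) with hT
  set D : ℝ × ℝ → (ℝ × ℝ →L[ℝ] ℝ × ℝ) := fun p =>
    (p.1 ^ (η - 1) • ContinuousLinearMap.fst ℝ ℝ ℝ).prod
      (p.2 ^ (γ - 1) • ContinuousLinearMap.snd ℝ ℝ ℝ) with hD
  have hT' : ∀ p ∈ s, HasFDerivWithinAt T (D p) s p := by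
    intro p hp
    have h1 : HasDerivAt (fun x : ℝ => x ^ η / η) (p.1 ^ (η - 1)) p.1 := by
      have := (Real.hasDerivAt_rpow_const (p := η) (Or.inl hp.1.ne')).div_const η
      simpa [mul_div_cancel_left₀ _ hη0.ne'] using this
    have h2 : HasDerivAt (fun y : ℝ => y ^ γ / γ) (p.2 ^ (γ - 1)) p.2 := by
      have := (Real.hasDerivAt_rpow_const (p := γ) (Or.inl hp.2.ne')).div_const γ
      simpa [mul_div_cancel_left₀ _ hγ0.ne'] using this
    exact ((h1.comp_hasFDerivAt p hasFDerivAt_fst).prodMk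
      (h2.comp_hasFDerivAt p hasFDerivAt_snd)).hasFDerivWithinAt
  have hinj : InjOn T s := by
    intro p hp q hq h
    have h1 : p.1 ^ η = q.1 ^ η := by
      have := congrArg Prod.fst h
      simp only [hT] at this
      exact (div_left_inj' hη0.ne').mp this
    have h2 : p.2 ^ γ = q.2 ^ γ := by
      have := congrArg Prod.snd h
      simp only [hT] at this
      exact (div_left_inj' hγ0.ne').mp this
    have e1 : p.1 = q.1 := Real.rpow_left_injOn hη0.ne' (mem_setOf.mpr hp.1.le) (mem_setOf.mpr hq.1.le) h1
    have e2 : p.2 = q.2 := Real.rpow_left_injOn hγ0.ne' (mem_setOf.mpr hp.2.le) (mem_setOf.mpr hq.2.le) h2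
    exact Prod.ext e1 e2
  have himg : T '' s = s := by
    ext ⟨X, Y⟩
    constructor
    · rintro ⟨⟨x, y⟩, ⟨hx, hy⟩, heq⟩
      rw [← heq]
      exact ⟨div_pos (rpow_pos_of_pos hx η) hη0, div_pos (rpow_pos_of_pos hy γ) hγ0⟩
    · rintro ⟨hX, hY⟩
      refine ⟨((η * X) ^ (1/η), (γ * Y) ^ (1/γ)),
        ⟨rpow_pos_of_pos (mul_pos hη0 hX) _, rpow_pos_of_pos (mul_pos hγ0 hY) _⟩, ?_⟩
      have e1 : ((η * X) ^ (1/η)) ^ η = η * X := by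
        rw [← rpow_mul (mul_pos hη0 hX).le, one_div_mul_cancel hη0.ne', rpow_one]
      have e2 : ((γ * Y) ^ (1/γ)) ^ γ = γ * Y := by
        rw [← rpow_mul (mul_pos hγ0 hY).le, one_div_mul_cancel hγ0.ne', rpow_one]
      simp only [hT, e1, e2, Prod.mk.injEq]
      constructor
      · rw [mul_comm, mul_div_assoc, div_self hη0.ne', mul_one]
      · rw [mul_comm, mul_div_assoc, div_self hγ0.ne', mul_one]
  have key := integral_image_eq_integral_abs_det_fderiv_smul volume hs hT' hinj g
  rw [himg] at key
  rw [key]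
  refine setIntegral_congr_fun hs ?_
  intro p hp
  simp only [hD, hT]
  rw [cdlst_det_aux, abs_of_nonneg (mul_nonneg (rpow_nonneg hp.1.le _) (rpow_nonneg hp.2.le _)),
    smul_eq_mul]

/-- Second shifting property for the ordinary double Laplace-type integral. -/
private lemma cdlst_shift_aux (v w a b : ℝ) (ha : 0 < a) (hb : 0 < b) (F : ℝ → ℝ → ℝ) :
    ∫ p in Ioi (0:ℝ) ×ˢ Ioi (0:ℝ),
        Real.exp (-v * p.1 - w * p.2) * F (p.1 - a) (p.2 - b) * Heaviside2 (p.1 - a) (p.2 - b)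
      = Real.exp (-v * a - w * b) *
        ∫ p in Ioi (0:ℝ) ×ˢ Ioi (0:ℝ), Real.exp (-v * p.1 - w * p.2) * F p.1 p.2 := by
  have hs : MeasurableSet (Ioi (0:ℝ) ×ˢ Ioi (0:ℝ)) := measurableSet_Ioi.prod measurableSet_Ioi
  have hab : MeasurableSet (Ioi a ×ˢ Ioi b) := measurableSet_Ioi.prod measurableSet_Ioi
  have key : (Ioi (0:ℝ) ×ˢ Ioi (0:ℝ)).indicator
      (fun p => Real.exp (-v * p.1 - w * p.2) * F (p.1 - a) (p.2 - b)
        * Heaviside2 (p.1 - a) (p.2 - b))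
      = (Ioi a ×ˢ Ioi b).indicator
        (fun p => Real.exp (-v * p.1 - w * p.2) * F (p.1 - a) (p.2 - b)) := by
    funext p
    by_cases hmem : p ∈ Ioi a ×ˢ Ioi b
    · have hps : p ∈ Ioi (0:ℝ) ×ˢ Ioi (0:ℝ) :=
        ⟨lt_trans ha hmem.1, lt_trans hb hmem.2⟩
      rw [indicator_of_mem hps, indicator_of_mem hmem]
      have hH : Heaviside2 (p.1 - a) (p.2 - b) = 1 := by
        simp only [Heaviside2, sub_pos]
        exact if_pos ⟨hmem.1, hmem.2⟩
      rw [hH, mul_one]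
    · rw [indicator_of_notMem hmem]
      by_cases hps : p ∈ Ioi (0:ℝ) ×ˢ Ioi (0:ℝ)
      · rw [indicator_of_mem hps]
        have hH : Heaviside2 (p.1 - a) (p.2 - b) = 0 := by
          have : ¬ (a < p.1 ∧ b < p.2) := by
            intro hc; exact hmem ⟨hc.1, hc.2⟩
          simp only [Heaviside2, sub_pos, ite_eq_right_iff]
          intro hc; exact absurd hc this
        rw [hH, mul_zero]
      · rw [indicator_of_notMem hps]
  have step1 : (∫ p in Ioi (0:ℝ) ×ˢ Ioi (0:ℝ),
      Real.exp (-v * p.1 - w * p.2) * F (p.1 - a) (p.2 - b) * Heaviside2 (p.1 - a) (p.2 - b))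
      = ∫ p in Ioi a ×ˢ Ioi b, Real.exp (-v * p.1 - w * p.2) * F (p.1 - a) (p.2 - b) := by
    rw [← integral_indicator hs, key, integral_indicator hab]
  rw [step1]
  have mp : MeasurePreserving (fun p : ℝ × ℝ => p + (a, b)) volume volume :=
    measurePreserving_add_right volume ((a, b) : ℝ × ℝ)
  have me : MeasurableEmbedding (fun p : ℝ × ℝ => p + (a, b)) :=
    (MeasurableEquiv.addRight ((a, b) : ℝ × ℝ)).measurableEmbedding
  have pre : (fun p : ℝ × ℝ => p + (a, b)) ⁻¹' (Ioi a ×ˢ Ioi b) = Ioi (0:ℝ) ×ˢ Ioi (0:ℝ) := by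
    ext p
    simp [Set.mem_preimage, Set.mem_prod, mem_Ioi, Prod.fst_add, Prod.snd_add]
  have step2 := mp.setIntegral_preimage_emb me
    (fun p : ℝ × ℝ => Real.exp (-v * p.1 - w * p.2) * F (p.1 - a) (p.2 - b)) (Ioi a ×ˢ Ioi b)
  rw [pre] at step2
  rw [← step2]
  rw [← MeasureTheory.integral_const_mul]
  refine setIntegral_congr_fun hs ?_
  intro p hp
  simp only [Prod.fst_add, Prod.snd_add, add_sub_cancel_right]
  rw [← mul_assoc, ← Real.exp_add]
  congr 2
  ring

/-- Theorem 7(6), second shifting property: the CDLST of the shifted function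
F(x^η/η − δ^η/η, y^γ/γ − ε^γ/γ)·H(x^η/η − δ^η/η, y^γ/γ − ε^γ/γ) equals
e^(−v δ^η/η − (1/ω) ε^γ/γ) times the CDLST of F. -/
theorem cdlst_second_shifting
    (η γ : ℝ) (hη0 : 0 < η) (hη1 : η ≤ 1) (hγ0 : 0 < γ) (hγ1 : γ ≤ 1)
    (v ω : ℝ) (hv : 0 < v) (hω : 0 < ω)
    (δ ε : ℝ) (hδ : 0 < δ) (hε : 0 < ε)
    (F : ℝ → ℝ → ℝ) (hF : Measurable (Function.uncurry F))
    (hF0 : ∀ X Y : ℝ, X < 0 ∨ Y < 0 → F X Y = 0)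
    (hint : IntegrableOn (fun p : ℝ × ℝ =>
        Real.exp (-v * p.1 ^ η / η - (1 / ω) * p.2 ^ γ / γ)
          * F (p.1 ^ η / η) (p.2 ^ γ / γ) * p.1 ^ (η - 1) * p.2 ^ (γ - 1))
        (Ioi (0 : ℝ) ×ˢ Ioi (0 : ℝ))) :
    (1 / ω) * ∫ p in Ioi (0 : ℝ) ×ˢ Ioi (0 : ℝ),
        Real.exp (-v * p.1 ^ η / η - (1 / ω) * p.2 ^ γ / γ)
          * F (p.1 ^ η / η - δ ^ η / η) (p.2 ^ γ / γ - ε ^ γ / γ)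
          * Heaviside2 (p.1 ^ η / η - δ ^ η / η) (p.2 ^ γ / γ - ε ^ γ / γ)
          * p.1 ^ (η - 1) * p.2 ^ (γ - 1)
      = Real.exp (-v * δ ^ η / η - (1 / ω) * ε ^ γ / γ) *
        ((1 / ω) * ∫ p in Ioi (0 : ℝ) ×ˢ Ioi (0 : ℝ),
          Real.exp (-v * p.1 ^ η / η - (1 / ω) * p.2 ^ γ / γ)
            * F (p.1 ^ η / η) (p.2 ^ γ / γ) * p.1 ^ (η - 1) * p.2 ^ (γ - 1)) := by
  have hs : MeasurableSet (Ioi (0:ℝ) ×ˢ Ioi (0:ℝ)) := measurableSet_Ioi.prod measurableSet_Ioi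
  have ha : 0 < δ ^ η / η := div_pos (rpow_pos_of_pos hδ η) hη0
  have hb : 0 < ε ^ γ / γ := div_pos (rpow_pos_of_pos hε γ) hγ0
  have h1 : (∫ p in Ioi (0 : ℝ) ×ˢ Ioi (0 : ℝ),
        Real.exp (-v * p.1 ^ η / η - (1 / ω) * p.2 ^ γ / γ)
          * F (p.1 ^ η / η - δ ^ η / η) (p.2 ^ γ / γ - ε ^ γ / γ)
          * Heaviside2 (p.1 ^ η / η - δ ^ η / η) (p.2 ^ γ / γ - ε ^ γ / γ)
          * p.1 ^ (η - 1) * p.2 ^ (γ - 1))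
      = ∫ p in Ioi (0 : ℝ) ×ˢ Ioi (0 : ℝ),
          Real.exp (-v * p.1 - (1 / ω) * p.2)
            * F (p.1 - δ ^ η / η) (p.2 - ε ^ γ / γ)
            * Heaviside2 (p.1 - δ ^ η / η) (p.2 - ε ^ γ / γ) := by
    rw [← cdlst_cov_aux η γ hη0 hγ0 (fun p =>
      Real.exp (-v * p.1 - (1 / ω) * p.2) * F (p.1 - δ ^ η / η) (p.2 - ε ^ γ / γ)
        * Heaviside2 (p.1 - δ ^ η / η) (p.2 - ε ^ γ / γ))]
    refine setIntegral_congr_fun hs ?_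
    intro p hp
    simp only [mul_div_assoc]
    ring
  have h2 : (∫ p in Ioi (0 : ℝ) ×ˢ Ioi (0 : ℝ),
        Real.exp (-v * p.1 ^ η / η - (1 / ω) * p.2 ^ γ / γ)
          * F (p.1 ^ η / η) (p.2 ^ γ / γ) * p.1 ^ (η - 1) * p.2 ^ (γ - 1))
      = ∫ p in Ioi (0 : ℝ) ×ˢ Ioi (0 : ℝ),
          Real.exp (-v * p.1 - (1 / ω) * p.2) * F p.1 p.2 := by
    rw [← cdlst_cov_aux η γ hη0 hγ0 (fun p =>
      Real.exp (-v * p.1 - (1 / ω) * p.2) * F p.1 p.2)]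
    refine setIntegral_congr_fun hs ?_
    intro p hp
    simp only [mul_div_assoc]
    ring
  rw [h1, h2, cdlst_shift_aux v (1/ω) (δ ^ η / η) (ε ^ γ / γ) ha hb F]
  rw [show -v * δ ^ η / η - 1 / ω * ε ^ γ / γ
      = -v * (δ ^ η / η) - 1 / ω * (ε ^ γ / γ) by ring]
  ring
end

section
/- (Existence of the CDLST for functions of exponential order.) Let 0 < η, γ ≤ 1, let c, d ∈ ℝ, K ≥ 0, and let g : (0,∞) × (0,∞) → ℝ be measurable with |g(x,y)| ≤ K·e^{c·x^η/η + d·y^γ/γ} for all x, y > 0. Then for every v > c and every ω > 0 with 1/ω > d, the function (x,y) ↦ e^{−v·x^η/η − (1/ω)·y^γ/γ}·g(x,y)·x^{η−1}·y^{γ−1} is Lebesgue integrable on (0,∞)², and the CDLST Ψ(v,ω) = (1/ω)·∫₀^∞∫₀^∞ e^{−v·x^η/η − (1/ω)·y^γ/γ}·g(x,y)·x^{η−1}·y^{γ−1} dx dy satisfies |Ψ(v,ω)| ≤ K/((v−c)·(1−d·ω)). -/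
open Real MeasureTheory Set

lemma cdlst_aux_integrable {a p : ℝ} (hp : 0 < p) (ha : 0 < a) :
    IntegrableOn (fun x : ℝ => Real.exp (-a * x ^ p / p) * x ^ (p - 1)) (Ioi 0) := by
  have h := (integrableOn_Ioi_comp_rpow_iff' (fun t : ℝ => Real.exp (-(a / p) * t)) hp.ne').mpr
    (exp_neg_integrableOn_Ioi 0 (by positivity : (0:ℝ) < a / p))
  refine h.congr_fun (fun x hx => ?_) measurableSet_Ioi
  simp only [smul_eq_mul]
  rw [mul_comm]
  congr 1
  ring_nf

lemma cdlst_aux_integral {a p : ℝ} (hp : 0 < p) (ha : 0 < a) :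
    ∫ x in Ioi (0:ℝ), Real.exp (-a * x ^ p / p) * x ^ (p - 1) = 1 / a := by
  have h := integral_comp_rpow_Ioi_of_pos (g := fun t : ℝ => Real.exp (-(a / p) * t)) hp
  have h2 : ∫ x in Ioi (0:ℝ), Real.exp (-(a/p) * x) = p / a := by
    have := integral_comp_mul_left_Ioi (fun x : ℝ => Real.exp (-x)) 0 (by positivity : (0:ℝ) < a / p)
    simp only [mul_zero, integral_exp_neg_Ioi, neg_zero, Real.exp_zero, smul_eq_mul, mul_one,
      neg_mul] at this ⊢
    rw [this, inv_div]
  rw [h2] at h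
  have h3 : ∫ x in Ioi (0:ℝ), (p * x ^ (p-1)) • Real.exp (-(a/p) * x ^ p)
      = p * ∫ x in Ioi (0:ℝ), Real.exp (-a * x ^ p / p) * x ^ (p - 1) := by
    rw [← integral_const_mul]
    refine setIntegral_congr_fun measurableSet_Ioi (fun x hx => ?_)
    simp only [smul_eq_mul]
    ring_nf
  rw [h3] at h
  have hpe : p * (1 / a) = p / a := by field_simp
  exact mul_left_cancel₀ hp.ne' (h.trans hpe.symm)

/-- Theorem 8: existence of the CDLST for functions of exponential orders c and d.
If |g(x,y)| ≤ K e^(c x^η/η + d y^γ/γ), then for v > c and 1/ω > d the CDLST integrand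
is Lebesgue integrable on (0,∞)² and |Ψ(v,ω)| ≤ K/((v − c)(1 − dω)). -/
theorem cdlst_exists_of_exponential_order
    (η γ : ℝ) (hη0 : 0 < η) (hη1 : η ≤ 1) (hγ0 : 0 < γ) (hγ1 : γ ≤ 1)
    (c d K : ℝ) (hK : 0 ≤ K)
    (g : ℝ → ℝ → ℝ) (hg : Measurable (Function.uncurry g))
    (hbound : ∀ x > (0 : ℝ), ∀ y > (0 : ℝ),
      |g x y| ≤ K * Real.exp (c * x ^ η / η + d * y ^ γ / γ))
    (v ω : ℝ) (hv : c < v) (hω : 0 < ω) (hωd : d < 1 / ω) :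
    IntegrableOn (fun p : ℝ × ℝ =>
        Real.exp (-v * p.1 ^ η / η - (1 / ω) * p.2 ^ γ / γ)
          * g p.1 p.2 * p.1 ^ (η - 1) * p.2 ^ (γ - 1))
        (Ioi (0 : ℝ) ×ˢ Ioi (0 : ℝ)) ∧
    |(1 / ω) * ∫ p in Ioi (0 : ℝ) ×ˢ Ioi (0 : ℝ),
        Real.exp (-v * p.1 ^ η / η - (1 / ω) * p.2 ^ γ / γ)
          * g p.1 p.2 * p.1 ^ (η - 1) * p.2 ^ (γ - 1)|
      ≤ K / ((v - c) * (1 - d * ω)) := by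
  have ha : 0 < v - c := sub_pos.mpr hv
  have hb : 0 < 1 / ω - d := sub_pos.mpr hωd
  set f : ℝ × ℝ → ℝ := fun p =>
    Real.exp (-v * p.1 ^ η / η - (1 / ω) * p.2 ^ γ / γ)
      * g p.1 p.2 * p.1 ^ (η - 1) * p.2 ^ (γ - 1) with hf
  set F1 : ℝ → ℝ := fun x => K * (Real.exp (-(v - c) * x ^ η / η) * x ^ (η - 1)) with hF1
  set F2 : ℝ → ℝ := fun y => Real.exp (-(1 / ω - d) * y ^ γ / γ) * y ^ (γ - 1) with hF2
  -- integrability of the dominating function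
  have hI1 : IntegrableOn F1 (Ioi 0) :=
    (cdlst_aux_integrable hη0 ha).const_mul K
  have hI2 : IntegrableOn F2 (Ioi 0) := cdlst_aux_integrable hγ0 hb
  have hIF : IntegrableOn (fun p : ℝ × ℝ => F1 p.1 * F2 p.2) (Ioi 0 ×ˢ Ioi 0) := by
    rw [IntegrableOn, Measure.volume_eq_prod, ← Measure.prod_restrict]
    exact hI1.mul_prod hI2
  -- measurability of f
  have hmeas : AEStronglyMeasurable f ((volume : Measure (ℝ × ℝ)).restrict (Ioi 0 ×ˢ Ioi 0)) := by
    have : Measurable f := by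
      apply Measurable.mul
      apply Measurable.mul
      apply Measurable.mul
      · exact (Real.measurable_exp.comp
          (((measurable_fst.pow_const η).const_mul (-v) |>.div_const η).sub
            ((measurable_snd.pow_const γ).const_mul (1/ω) |>.div_const γ)))
      · exact hg
      · exact measurable_fst.pow_const (η - 1)
      · exact measurable_snd.pow_const (γ - 1)
    exact this.aestronglyMeasurable.restrict
  -- a.e. bound
  have hbd : ∀ᵐ p ∂((volume : Measure (ℝ × ℝ)).restrict (Ioi 0 ×ˢ Ioi 0)),
      ‖f p‖ ≤ F1 p.1 * F2 p.2 := by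
    filter_upwards [ae_restrict_mem (measurableSet_Ioi.prod measurableSet_Ioi)] with p hp
    obtain ⟨hx, hy⟩ := hp
    rw [mem_Ioi] at hx hy
    have hxp : (0:ℝ) ≤ p.1 ^ (η - 1) := (Real.rpow_pos_of_pos hx _).le
    have hyp : (0:ℝ) ≤ p.2 ^ (γ - 1) := (Real.rpow_pos_of_pos hy _).le
    have hexp : Real.exp (-v * p.1 ^ η / η - (1 / ω) * p.2 ^ γ / γ)
        * Real.exp (c * p.1 ^ η / η + d * p.2 ^ γ / γ)
        = Real.exp (-(v - c) * p.1 ^ η / η) * Real.exp (-(1 / ω - d) * p.2 ^ γ / γ) := by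
      rw [← Real.exp_add, ← Real.exp_add]
      congr 1
      ring
    have : ‖f p‖ = Real.exp (-v * p.1 ^ η / η - (1 / ω) * p.2 ^ γ / γ)
        * |g p.1 p.2| * p.1 ^ (η - 1) * p.2 ^ (γ - 1) := by
      rw [hf]
      simp only [Real.norm_eq_abs, abs_mul, abs_of_nonneg (Real.exp_pos _).le,
        abs_of_nonneg hxp, abs_of_nonneg hyp]
    rw [this]
    calc Real.exp (-v * p.1 ^ η / η - (1 / ω) * p.2 ^ γ / γ)
          * |g p.1 p.2| * p.1 ^ (η - 1) * p.2 ^ (γ - 1)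
        ≤ Real.exp (-v * p.1 ^ η / η - (1 / ω) * p.2 ^ γ / γ)
          * (K * Real.exp (c * p.1 ^ η / η + d * p.2 ^ γ / γ)) * p.1 ^ (η - 1) * p.2 ^ (γ - 1) := by
          gcongr
          exact hbound p.1 hx p.2 hy
      _ = F1 p.1 * F2 p.2 := by
          simp only [hF1, hF2]
          linear_combination (K * p.1 ^ (η - 1) * p.2 ^ (γ - 1)) * hexp
  have hInt : IntegrableOn f (Ioi (0:ℝ) ×ˢ Ioi 0) := Integrable.mono' hIF hmeas hbd
  refine ⟨hInt, ?_⟩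
  -- the bound on the integral
  have hFint : ∫ p in Ioi (0:ℝ) ×ˢ Ioi 0, F1 p.1 * F2 p.2
      = (K * (1 / (v - c))) * (1 / (1 / ω - d)) := by
    rw [Measure.volume_eq_prod, setIntegral_prod_mul, hF1, hF2, integral_const_mul,
      cdlst_aux_integral hη0 ha, cdlst_aux_integral hγ0 hb]
  have hnorm : ‖∫ p in Ioi (0:ℝ) ×ˢ Ioi 0, f p‖ ≤ (K * (1 / (v - c))) * (1 / (1 / ω - d)) := by
    rw [← hFint]
    exact norm_integral_le_of_norm_le hIF hbd
  rw [abs_mul]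
  have h1 : |1 / ω| = 1 / ω := abs_of_pos (by positivity)
  rw [h1]
  have hfin : (1 / ω) * ((K * (1 / (v - c))) * (1 / (1 / ω - d))) = K / ((v - c) * (1 - d * ω)) := by
    rw [div_sub' hω.ne']
    field_simp
  calc (1 / ω) * |∫ p in Ioi (0:ℝ) ×ˢ Ioi 0, f p|
      ≤ (1 / ω) * ((K * (1 / (v - c))) * (1 / (1 / ω - d))) := by
        apply mul_le_mul_of_nonneg_left _ (by positivity)
        exact hnorm
    _ = K / ((v - c) * (1 - d * ω)) := hfin
end

section
/- (CDLST of the first conformable x-derivative, Theorem 9 formula (6).) Let 0 < η, γ ≤ 1, v > 0, ω > 0, and let g : [0,∞) × (0,∞) → ℝ satisfy: for each y > 0, x ↦ g(x,y) is differentiable on (0,∞) and continuous at 0; for each y > 0, e^{−v·x^η/η}·g(x,y) → 0 as x → ∞; the functions (x,y) ↦ e^{−v·x^η/η − (1/ω)·y^γ/γ}·∂g/∂x(x,y)·y^{γ−1} and (x,y) ↦ e^{−v·x^η/η − (1/ω)·y^γ/γ}·g(x,y)·x^{η−1}·y^{γ−1} are Lebesgue integrable on (0,∞)², and y ↦ e^{−(1/ω)·y^γ/γ}·g(0,y)·y^{γ−1}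 is integrable on (0,∞). Then (1/ω)·∫₀^∞∫₀^∞ e^{−v·x^η/η − (1/ω)·y^γ/γ} · (x^{1−η}·∂g/∂x(x,y)) · x^{η−1}·y^{γ−1} dx dy = v·Ψ(v,ω) − (1/ω)·∫₀^∞ e^{−(1/ω)·y^γ/γ}·g(0,y)·y^{γ−1} dy, where Ψ(v,ω) is the CDLST of g. -/
open Real MeasureTheory Set Filter Topology

/-- Theorem 9, formula (6): the CDLST of the first conformable x-derivative
D^η_x g = x^(1−η)·∂g/∂x satisfies
L_x S_y[D^η_x g](v,ω) = v·Ψ(v,ω) − S_y[g(0,·)](ω). -/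
theorem cdlst_conformable_deriv_x
    (η γ : ℝ) (hη0 : 0 < η) (hη1 : η ≤ 1) (hγ0 : 0 < γ) (hγ1 : γ ≤ 1)
    (v ω : ℝ) (hv : 0 < v) (hω : 0 < ω)
    (g g' : ℝ → ℝ → ℝ)
    (hderiv : ∀ y > (0 : ℝ), ∀ x > (0 : ℝ), HasDerivAt (fun t => g t y) (g' x y) x)
    (hcont : ∀ y > (0 : ℝ), ContinuousWithinAt (fun t => g t y) (Ici 0) 0)
    (hlim : ∀ y > (0 : ℝ),
      Tendsto (fun x : ℝ => Real.exp (-v * x ^ η / η) * g x y) atTop (𝓝 0))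
    (hint1 : IntegrableOn (fun p : ℝ × ℝ =>
        Real.exp (-v * p.1 ^ η / η - (1 / ω) * p.2 ^ γ / γ)
          * g' p.1 p.2 * p.2 ^ (γ - 1)) (Ioi (0 : ℝ) ×ˢ Ioi (0 : ℝ)))
    (hint2 : IntegrableOn (fun p : ℝ × ℝ =>
        Real.exp (-v * p.1 ^ η / η - (1 / ω) * p.2 ^ γ / γ)
          * g p.1 p.2 * p.1 ^ (η - 1) * p.2 ^ (γ - 1)) (Ioi (0 : ℝ) ×ˢ Ioi (0 : ℝ)))
    (hint3 : IntegrableOn (fun y : ℝ =>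
        Real.exp (-(1 / ω) * y ^ γ / γ) * g 0 y * y ^ (γ - 1)) (Ioi (0 : ℝ))) :
    (1 / ω) * ∫ p in Ioi (0 : ℝ) ×ˢ Ioi (0 : ℝ),
        Real.exp (-v * p.1 ^ η / η - (1 / ω) * p.2 ^ γ / γ)
          * (p.1 ^ (1 - η) * g' p.1 p.2) * p.1 ^ (η - 1) * p.2 ^ (γ - 1)
      = v * ((1 / ω) * ∫ p in Ioi (0 : ℝ) ×ˢ Ioi (0 : ℝ),
            Real.exp (-v * p.1 ^ η / η - (1 / ω) * p.2 ^ γ / γ)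
              * g p.1 p.2 * p.1 ^ (η - 1) * p.2 ^ (γ - 1))
        - (1 / ω) * ∫ y in Ioi (0 : ℝ),
            Real.exp (-(1 / ω) * y ^ γ / γ) * g 0 y * y ^ (γ - 1) := by
  have hη : η ≠ 0 := ne_of_gt hη0
  -- exponential splitting
  have hAB : ∀ x y : ℝ, Real.exp (-v * x ^ η / η - (1 / ω) * y ^ γ / γ)
      = Real.exp (-v * x ^ η / η) * Real.exp (-(1 / ω) * y ^ γ / γ) := by
    intro x y
    rw [← Real.exp_add]
    ring_nf
  -- converting set integrability on the product to product-measure integrability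
  have convI : ∀ f : ℝ × ℝ → ℝ, IntegrableOn f (Ioi (0 : ℝ) ×ˢ Ioi (0 : ℝ)) →
      Integrable f ((volume.restrict (Ioi (0 : ℝ))).prod (volume.restrict (Ioi (0 : ℝ)))) := by
    intro f hf
    rwa [Measure.prod_restrict, ← Measure.volume_eq_prod ℝ ℝ]
  have hmeq : (volume : Measure (ℝ × ℝ)).restrict (Ioi (0 : ℝ) ×ˢ Ioi (0 : ℝ))
      = (volume.restrict (Ioi (0 : ℝ))).prod (volume.restrict (Ioi (0 : ℝ))) := by
    rw [Measure.prod_restrict, ← Measure.volume_eq_prod ℝ ℝ]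
  have key : ∀ f : ℝ × ℝ → ℝ, IntegrableOn f (Ioi (0 : ℝ) ×ˢ Ioi (0 : ℝ)) →
      ∫ p in Ioi (0 : ℝ) ×ˢ Ioi (0 : ℝ), f p
        = ∫ y in Ioi (0 : ℝ), ∫ x in Ioi (0 : ℝ), f (x, y) := by
    intro f hf
    rw [show (∫ p in Ioi (0 : ℝ) ×ˢ Ioi (0 : ℝ), f p)
        = ∫ p, f p ∂((volume.restrict (Ioi (0 : ℝ))).prod (volume.restrict (Ioi (0 : ℝ)))) by
      rw [← hmeq]]
    exact integral_prod_symm f (convI f hf)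
  have hint1' := convI _ hint1
  have hint2' := convI _ hint2
  -- Step A: rewrite the LHS integrand using x^(1-η)·x^(η-1) = 1 on the product set
  have hLHS : (∫ p in Ioi (0 : ℝ) ×ˢ Ioi (0 : ℝ),
      Real.exp (-v * p.1 ^ η / η - (1 / ω) * p.2 ^ γ / γ)
        * (p.1 ^ (1 - η) * g' p.1 p.2) * p.1 ^ (η - 1) * p.2 ^ (γ - 1))
      = ∫ p in Ioi (0 : ℝ) ×ˢ Ioi (0 : ℝ),
        Real.exp (-v * p.1 ^ η / η - (1 / ω) * p.2 ^ γ / γ)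
          * g' p.1 p.2 * p.2 ^ (γ - 1) := by
    apply setIntegral_congr_fun (measurableSet_Ioi.prod measurableSet_Ioi)
    intro p hp
    have hx : (0 : ℝ) < p.1 := hp.1
    have h1 : p.1 ^ (1 - η) * p.1 ^ (η - 1) = 1 := by
      rw [← Real.rpow_add hx]
      norm_num
    calc Real.exp (-v * p.1 ^ η / η - (1 / ω) * p.2 ^ γ / γ)
          * (p.1 ^ (1 - η) * g' p.1 p.2) * p.1 ^ (η - 1) * p.2 ^ (γ - 1)
        = Real.exp (-v * p.1 ^ η / η - (1 / ω) * p.2 ^ γ / γ)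
            * g' p.1 p.2 * p.2 ^ (γ - 1) * (p.1 ^ (1 - η) * p.1 ^ (η - 1)) := by ring
      _ = _ := by rw [h1, mul_one]
  -- per-y integration by parts
  have perY : ∀ᵐ y ∂(volume.restrict (Ioi (0 : ℝ))),
      (∫ x in Ioi (0 : ℝ), Real.exp (-v * x ^ η / η - (1 / ω) * y ^ γ / γ)
          * g' x y * y ^ (γ - 1))
        = v * (∫ x in Ioi (0 : ℝ), Real.exp (-v * x ^ η / η - (1 / ω) * y ^ γ / γ)
            * g x y * x ^ (η - 1) * y ^ (γ - 1))
          - Real.exp (-(1 / ω) * y ^ γ / γ) * g 0 y * y ^ (γ - 1) := by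
    filter_upwards [hint1'.prod_left_ae, hint2'.prod_left_ae,
      ae_restrict_mem measurableSet_Ioi] with y hI1y hI2y hy
    have hy' : (0 : ℝ) < y := hy
    set B : ℝ := Real.exp (-(1 / ω) * y ^ γ / γ) with hB
    have hBpos : 0 < B := Real.exp_pos _
    have hypow : (0 : ℝ) < y ^ (γ - 1) := Real.rpow_pos_of_pos hy' _
    have hcB : B * y ^ (γ - 1) ≠ 0 := by positivity
    -- slice integrabilities
    have hg'int : Integrable (fun x => Real.exp (-v * x ^ η / η) * g' x y)
        (volume.restrict (Ioi (0 : ℝ))) := by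
      refine (hI1y.mul_const (B * y ^ (γ - 1))⁻¹).congr
        (Eventually.of_forall fun x => ?_)
      simp only [hAB, ← hB]
      field_simp
    have hgint : Integrable (fun x => Real.exp (-v * x ^ η / η) * x ^ (η - 1) * g x y)
        (volume.restrict (Ioi (0 : ℝ))) := by
      refine (hI2y.mul_const (B * y ^ (γ - 1))⁻¹).congr
        (Eventually.of_forall fun x => ?_)
      simp only [hAB, ← hB]
      field_simp
    -- the FTC on the half-line
    have hder : ∀ x ∈ Ioi (0 : ℝ), HasDerivAt (fun x => Real.exp (-v * x ^ η / η) * g x y)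
        (Real.exp (-v * x ^ η / η) * g' x y
          - v * (Real.exp (-v * x ^ η / η) * x ^ (η - 1) * g x y)) x := by
      intro x hx
      have hx' : (0 : ℝ) < x := hx
      have h1 : HasDerivAt (fun x : ℝ => x ^ η) (η * x ^ (η - 1)) x :=
        Real.hasDerivAt_rpow_const (Or.inl (ne_of_gt hx'))
      have h2 : HasDerivAt (fun x : ℝ => -v * x ^ η / η) (-v * x ^ (η - 1)) x := by
        have h3 := (h1.const_mul (-v)).div_const η
        refine h3.congr_deriv ?_
        field_simp
      have hA : HasDerivAt (fun x : ℝ => Real.exp (-v * x ^ η / η))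
          (Real.exp (-v * x ^ η / η) * (-v * x ^ (η - 1))) x := h2.exp
      have := hA.mul (hderiv y hy' x hx')
      refine this.congr_deriv ?_
      ring
    have hcontF : ContinuousWithinAt (fun x : ℝ => Real.exp (-v * x ^ η / η) * g x y)
        (Ici 0) 0 := by
      have h1 : ContinuousAt (fun x : ℝ => x ^ η) 0 :=
        Real.continuousAt_rpow_const 0 η (Or.inr (le_of_lt hη0))
      have h2 : ContinuousAt (fun x : ℝ => Real.exp (-v * x ^ η / η)) 0 :=
        Real.continuous_exp.continuousAt.comp ((h1.const_mul (-v)).div_const η)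
      exact h2.continuousWithinAt.mul (hcont y hy')
    have hF'int : IntegrableOn (fun x => Real.exp (-v * x ^ η / η) * g' x y
        - v * (Real.exp (-v * x ^ η / η) * x ^ (η - 1) * g x y)) (Ioi (0 : ℝ)) :=
      hg'int.sub (hgint.const_mul v)
    have hftc := integral_Ioi_of_hasDerivAt_of_tendsto hcontF hder hF'int (hlim y hy')
    have hF0 : Real.exp (-v * (0 : ℝ) ^ η / η) * g 0 y = g 0 y := by
      rw [Real.zero_rpow hη]
      simp
    rw [hF0] at hftc
    have hsplit : (∫ x in Ioi (0 : ℝ), (Real.exp (-v * x ^ η / η) * g' x y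
        - v * (Real.exp (-v * x ^ η / η) * x ^ (η - 1) * g x y)))
        = (∫ x in Ioi (0 : ℝ), Real.exp (-v * x ^ η / η) * g' x y)
          - v * ∫ x in Ioi (0 : ℝ), Real.exp (-v * x ^ η / η) * x ^ (η - 1) * g x y := by
      rw [integral_sub hg'int (hgint.const_mul v), integral_const_mul]
    rw [hsplit] at hftc
    -- now express the target integrals by pulling out the constant B * y^(γ-1)
    have e1 : (∫ x in Ioi (0 : ℝ), Real.exp (-v * x ^ η / η - (1 / ω) * y ^ γ / γ)
        * g' x y * y ^ (γ - 1))
        = (∫ x in Ioi (0 : ℝ), Real.exp (-v * x ^ η / η) * g' x y) * (B * y ^ (γ - 1)) := by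
      rw [← integral_mul_const]
      refine integral_congr_ae (Eventually.of_forall fun x => ?_)
      simp only [hAB, ← hB]
      ring
    have e2 : (∫ x in Ioi (0 : ℝ), Real.exp (-v * x ^ η / η - (1 / ω) * y ^ γ / γ)
        * g x y * x ^ (η - 1) * y ^ (γ - 1))
        = (∫ x in Ioi (0 : ℝ), Real.exp (-v * x ^ η / η) * x ^ (η - 1) * g x y)
            * (B * y ^ (γ - 1)) := by
      rw [← integral_mul_const]
      refine integral_congr_ae (Eventually.of_forall fun x => ?_)
      simp only [hAB, ← hB]
      ring
    rw [e1, e2]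
    have hI : (∫ x in Ioi (0 : ℝ), Real.exp (-v * x ^ η / η) * g' x y)
        = v * (∫ x in Ioi (0 : ℝ), Real.exp (-v * x ^ η / η) * x ^ (η - 1) * g x y)
          - g 0 y := by linarith [hftc]
    rw [hI]
    ring
  -- assemble everything
  have main : (∫ p in Ioi (0 : ℝ) ×ˢ Ioi (0 : ℝ),
      Real.exp (-v * p.1 ^ η / η - (1 / ω) * p.2 ^ γ / γ)
        * (p.1 ^ (1 - η) * g' p.1 p.2) * p.1 ^ (η - 1) * p.2 ^ (γ - 1))
      = v * (∫ p in Ioi (0 : ℝ) ×ˢ Ioi (0 : ℝ),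
          Real.exp (-v * p.1 ^ η / η - (1 / ω) * p.2 ^ γ / γ)
            * g p.1 p.2 * p.1 ^ (η - 1) * p.2 ^ (γ - 1))
        - ∫ y in Ioi (0 : ℝ), Real.exp (-(1 / ω) * y ^ γ / γ) * g 0 y * y ^ (γ - 1) := by
    rw [hLHS, key _ hint1, key _ hint2]
    have hK : Integrable (fun y => ∫ x in Ioi (0 : ℝ),
        Real.exp (-v * x ^ η / η - (1 / ω) * y ^ γ / γ) * g x y * x ^ (η - 1) * y ^ (γ - 1))
        (volume.restrict (Ioi (0 : ℝ))) := hint2'.integral_prod_right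
    calc (∫ y in Ioi (0 : ℝ), ∫ x in Ioi (0 : ℝ),
          Real.exp (-v * x ^ η / η - (1 / ω) * y ^ γ / γ) * g' x y * y ^ (γ - 1))
        = ∫ y in Ioi (0 : ℝ), (v * (∫ x in Ioi (0 : ℝ),
            Real.exp (-v * x ^ η / η - (1 / ω) * y ^ γ / γ)
              * g x y * x ^ (η - 1) * y ^ (γ - 1))
            - Real.exp (-(1 / ω) * y ^ γ / γ) * g 0 y * y ^ (γ - 1)) :=
          integral_congr_ae perY
      _ = v * (∫ y in Ioi (0 : ℝ), ∫ x in Ioi (0 : ℝ),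
            Real.exp (-v * x ^ η / η - (1 / ω) * y ^ γ / γ)
              * g x y * x ^ (η - 1) * y ^ (γ - 1))
          - ∫ y in Ioi (0 : ℝ), Real.exp (-(1 / ω) * y ^ γ / γ) * g 0 y * y ^ (γ - 1) := by
          rw [integral_sub (hK.const_mul v) hint3, integral_const_mul]
  rw [main]
  ring
end

section
/- (CDLST of the first conformable y-derivative, Theorem 9 formula (7).) Let 0 < η, γ ≤ 1, v > 0, ω > 0, and let g : (0,∞) × [0,∞) → ℝ satisfy: for each x > 0, y ↦ g(x,y) is differentiable on (0,∞) and continuous at 0; for each x > 0, e^{−(1/ω)·y^γ/γ}·g(x,y) → 0 as y → ∞; the functions (x,y) ↦ e^{−v·x^η/η − (1/ω)·y^γ/γ}·∂g/∂y(x,y)·x^{η−1} and (x,y) ↦ e^{−v·x^η/η − (1/ω)·y^γ/γ}·g(x,y)·x^{η−1}·y^{γ−1} are Lebesgue integrable on (0,∞)², and x ↦ e^{−v·x^η/η}·g(x,0)·x^{η−1} is integrable on (0,∞). Then (1/ω)·∫₀^∞∫₀^∞ e^{−v·x^η/η − (1/ω)·y^γ/γ} · (y^{1−γ}·∂g/∂y(x,y))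 · x^{η−1}·y^{γ−1} dx dy = ω^{−1}·Ψ(v,ω) − ω^{−1}·∫₀^∞ e^{−v·x^η/η}·g(x,0)·x^{η−1} dx, where Ψ(v,ω) is the CDLST of g. -/
open Real MeasureTheory Set Filter Topology

/-- Integration by parts for the conformable Sumudu kernel in one variable. -/
lemma cdlst_inner_ibp (γ : ℝ) (hγ0 : 0 < γ) (c : ℝ)
    (f f' : ℝ → ℝ)
    (hderiv : ∀ y > (0:ℝ), HasDerivAt f (f' y) y)
    (hcont : ContinuousWithinAt f (Ici 0) 0)
    (hlim : Tendsto (fun y : ℝ => Real.exp (-c * y ^ γ / γ) * f y) atTop (𝓝 0))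
    (hi1 : IntegrableOn (fun y : ℝ => Real.exp (-c * y ^ γ / γ) * f' y) (Ioi 0))
    (hi2 : IntegrableOn (fun y : ℝ => Real.exp (-c * y ^ γ / γ) * y ^ (γ - 1) * f y) (Ioi 0)) :
    ∫ y in Ioi (0:ℝ), Real.exp (-c * y ^ γ / γ) * f' y
      = -f 0 + c * ∫ y in Ioi (0:ℝ), Real.exp (-c * y ^ γ / γ) * y ^ (γ - 1) * f y := by
  set φ : ℝ → ℝ := fun y => Real.exp (-c * y ^ γ / γ) * f y with hφ
  set D : ℝ → ℝ := fun y => Real.exp (-c * y ^ γ / γ) * f' y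
      - c * (Real.exp (-c * y ^ γ / γ) * y ^ (γ - 1) * f y) with hD
  have hder : ∀ y ∈ Ioi (0:ℝ), HasDerivAt φ (D y) y := by
    intro y hy
    have hy0 : (y:ℝ) ≠ 0 := ne_of_gt hy
    have h1 : HasDerivAt (fun t : ℝ => t ^ γ) (γ * y ^ (γ - 1)) y :=
      Real.hasDerivAt_rpow_const (Or.inl hy0)
    have h2 : HasDerivAt (fun t : ℝ => -c * t ^ γ / γ)
        (-c * (γ * y ^ (γ - 1)) / γ) y := (h1.const_mul (-c)).div_const γ
    have h3 : HasDerivAt (fun t : ℝ => Real.exp (-c * t ^ γ / γ))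
        (Real.exp (-c * y ^ γ / γ) * (-c * (γ * y ^ (γ - 1)) / γ)) y := h2.exp
    have h4 := h3.mul (hderiv y hy)
    refine h4.congr_deriv ?_
    field_simp [hD]
    simp only [hD]
    ring
  have hDint : IntegrableOn D (Ioi (0:ℝ)) := hi1.sub (hi2.const_mul c)
  have hφcont : ContinuousWithinAt φ (Ici 0) 0 := by
    apply ContinuousWithinAt.mul _ hcont
    have : ContinuousWithinAt (fun t : ℝ => -c * t ^ γ / γ) (Ici 0) 0 := by
      apply ContinuousWithinAt.div_const
      exact ((Real.continuousAt_rpow_const 0 γ (Or.inr hγ0.le)).continuousWithinAt).const_smul (-c)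
    exact (Real.continuous_exp.continuousAt.comp_continuousWithinAt this)
  have key : ∫ y in Ioi (0:ℝ), D y = 0 - φ 0 :=
    integral_Ioi_of_hasDerivAt_of_tendsto hφcont hder hDint hlim
  have hφ0 : φ 0 = f 0 := by
    simp [hφ, Real.zero_rpow hγ0.ne']
  rw [hφ0] at key
  have hsplit : ∫ y in Ioi (0:ℝ), D y
      = (∫ y in Ioi (0:ℝ), Real.exp (-c * y ^ γ / γ) * f' y)
        - c * ∫ y in Ioi (0:ℝ), Real.exp (-c * y ^ γ / γ) * y ^ (γ - 1) * f y := by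
    rw [hD]
    rw [integral_sub hi1 (hi2.const_mul c), MeasureTheory.integral_const_mul]
  rw [hsplit] at key
  linarith

/-- Theorem 9, formula (7): the CDLST of the first conformable y-derivative
D^γ_y g = y^(1−γ)·∂g/∂y satisfies
L_x S_y[D^γ_y g](v,ω) = ω⁻¹·Ψ(v,ω) − ω⁻¹·L_x[g(·,0)](v). -/
theorem cdlst_conformable_deriv_y
    (η γ : ℝ) (hη0 : 0 < η) (hη1 : η ≤ 1) (hγ0 : 0 < γ) (hγ1 : γ ≤ 1)
    (v ω : ℝ) (hv : 0 < v) (hω : 0 < ω)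
    (g g' : ℝ → ℝ → ℝ)
    (hderiv : ∀ x > (0 : ℝ), ∀ y > (0 : ℝ), HasDerivAt (fun t => g x t) (g' x y) y)
    (hcont : ∀ x > (0 : ℝ), ContinuousWithinAt (fun t => g x t) (Ici 0) 0)
    (hlim : ∀ x > (0 : ℝ),
      Tendsto (fun y : ℝ => Real.exp (-(1 / ω) * y ^ γ / γ) * g x y) atTop (𝓝 0))
    (hint1 : IntegrableOn (fun p : ℝ × ℝ =>
        Real.exp (-v * p.1 ^ η / η - (1 / ω) * p.2 ^ γ / γ)
          * g' p.1 p.2 * p.1 ^ (η - 1)) (Ioi (0 : ℝ) ×ˢ Ioi (0 : ℝ)))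
    (hint2 : IntegrableOn (fun p : ℝ × ℝ =>
        Real.exp (-v * p.1 ^ η / η - (1 / ω) * p.2 ^ γ / γ)
          * g p.1 p.2 * p.1 ^ (η - 1) * p.2 ^ (γ - 1)) (Ioi (0 : ℝ) ×ˢ Ioi (0 : ℝ)))
    (hint3 : IntegrableOn (fun x : ℝ =>
        Real.exp (-v * x ^ η / η) * g x 0 * x ^ (η - 1)) (Ioi (0 : ℝ))) :
    (1 / ω) * ∫ p in Ioi (0 : ℝ) ×ˢ Ioi (0 : ℝ),
        Real.exp (-v * p.1 ^ η / η - (1 / ω) * p.2 ^ γ / γ)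
          * (p.2 ^ (1 - γ) * g' p.1 p.2) * p.1 ^ (η - 1) * p.2 ^ (γ - 1)
      = ω⁻¹ * ((1 / ω) * ∫ p in Ioi (0 : ℝ) ×ˢ Ioi (0 : ℝ),
            Real.exp (-v * p.1 ^ η / η - (1 / ω) * p.2 ^ γ / γ)
              * g p.1 p.2 * p.1 ^ (η - 1) * p.2 ^ (γ - 1))
        - ω⁻¹ * ∫ x in Ioi (0 : ℝ),
            Real.exp (-v * x ^ η / η) * g x 0 * x ^ (η - 1) := by
  have hc0 : (0:ℝ) < 1/ω := by positivity
  set c : ℝ := 1/ω with hcdef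
  set μ : Measure ℝ := volume.restrict (Ioi (0:ℝ)) with hμdef
  rw [Measure.volume_eq_prod] at hint1 hint2 ⊢
  have hmeasP : MeasurableSet (Ioi (0:ℝ) ×ˢ Ioi (0:ℝ)) :=
    measurableSet_Ioi.prod measurableSet_Ioi
  -- Step 1: on the product set, p.2 ^ (1-γ) * p.2 ^ (γ-1) = 1
  have step1 : (∫ p in Ioi (0:ℝ) ×ˢ Ioi (0:ℝ),
        Real.exp (-v * p.1 ^ η / η - c * p.2 ^ γ / γ)
          * (p.2 ^ (1 - γ) * g' p.1 p.2) * p.1 ^ (η - 1) * p.2 ^ (γ - 1)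
          ∂(volume.prod volume))
      = ∫ p in Ioi (0:ℝ) ×ˢ Ioi (0:ℝ),
        Real.exp (-v * p.1 ^ η / η - c * p.2 ^ γ / γ)
          * g' p.1 p.2 * p.1 ^ (η - 1) ∂(volume.prod volume) := by
    apply setIntegral_congr_fun hmeasP
    rintro ⟨x, y⟩ ⟨hx, hy⟩
    have hy0 : (0:ℝ) < y := hy
    have hone : y ^ (1 - γ) * y ^ (γ - 1) = 1 := by
      rw [← Real.rpow_add hy0]
      norm_num
    simp only
    calc Real.exp (-v * x ^ η / η - c * y ^ γ / γ)
          * (y ^ (1 - γ) * g' x y) * x ^ (η - 1) * y ^ (γ - 1)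
        = Real.exp (-v * x ^ η / η - c * y ^ γ / γ)
          * g' x y * x ^ (η - 1) * (y ^ (1 - γ) * y ^ (γ - 1)) := by ring
      _ = _ := by rw [hone, mul_one]
  -- Integrability over the product of restricted measures
  have hint1' : Integrable (fun p : ℝ × ℝ =>
      Real.exp (-v * p.1 ^ η / η - c * p.2 ^ γ / γ)
        * g' p.1 p.2 * p.1 ^ (η - 1)) (μ.prod μ) := by
    rw [hμdef, Measure.prod_restrict]; exact hint1
  have hint2' : Integrable (fun p : ℝ × ℝ =>
      Real.exp (-v * p.1 ^ η / η - c * p.2 ^ γ / γ)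
        * g p.1 p.2 * p.1 ^ (η - 1) * p.2 ^ (γ - 1)) (μ.prod μ) := by
    rw [hμdef, Measure.prod_restrict]; exact hint2
  -- a.e. inner identity
  have hAE : ∀ᵐ x ∂μ,
      (∫ y, Real.exp (-v * x ^ η / η - c * y ^ γ / γ) * g' x y * x ^ (η - 1) ∂μ)
        = -(Real.exp (-v * x ^ η / η) * g x 0 * x ^ (η - 1))
          + c * ∫ y, Real.exp (-v * x ^ η / η - c * y ^ γ / γ)
              * g x y * x ^ (η - 1) * y ^ (γ - 1) ∂μ := by
    filter_upwards [hint1'.prod_right_ae, hint2'.prod_right_ae,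
      ae_restrict_mem measurableSet_Ioi] with x h1 h2 hx
    have hx0 : (0:ℝ) < x := hx
    set A : ℝ := Real.exp (-v * x ^ η / η) * x ^ (η - 1) with hAdef
    have hA0 : A ≠ 0 := by
      have : (0:ℝ) < x ^ (η - 1) := Real.rpow_pos_of_pos hx0 _
      positivity
    have hfun1 : (fun y : ℝ => Real.exp (-v * x ^ η / η - c * y ^ γ / γ)
          * g' x y * x ^ (η - 1))
        = fun y : ℝ => A * (Real.exp (-c * y ^ γ / γ) * g' x y) := by
      funext y
      rw [show -v * x ^ η / η - c * y ^ γ / γ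
          = (-v * x ^ η / η) + (-c * y ^ γ / γ) by ring, Real.exp_add, hAdef]
      ring
    have hfun2 : (fun y : ℝ => Real.exp (-v * x ^ η / η - c * y ^ γ / γ)
          * g x y * x ^ (η - 1) * y ^ (γ - 1))
        = fun y : ℝ => A * (Real.exp (-c * y ^ γ / γ) * y ^ (γ - 1) * g x y) := by
      funext y
      rw [show -v * x ^ η / η - c * y ^ γ / γ
          = (-v * x ^ η / η) + (-c * y ^ γ / γ) by ring, Real.exp_add, hAdef]
      ring
    rw [hfun1] at h1
    rw [hfun2] at h2
    have hi1 : Integrable (fun y : ℝ => Real.exp (-c * y ^ γ / γ) * g' x y) μ :=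
      (integrable_const_mul_iff (isUnit_iff_ne_zero.mpr hA0) _).mp h1
    have hi2 : Integrable (fun y : ℝ =>
        Real.exp (-c * y ^ γ / γ) * y ^ (γ - 1) * g x y) μ :=
      (integrable_const_mul_iff (isUnit_iff_ne_zero.mpr hA0) _).mp h2
    have key := cdlst_inner_ibp γ hγ0 c (g x) (g' x)
      (fun y hy => hderiv x hx0 y hy) (hcont x hx0) (hlim x hx0) hi1 hi2
    calc (∫ y, Real.exp (-v * x ^ η / η - c * y ^ γ / γ) * g' x y * x ^ (η - 1) ∂μ)
        = ∫ y, A * (Real.exp (-c * y ^ γ / γ) * g' x y) ∂μ := by rw [hfun1]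
      _ = A * ∫ y, Real.exp (-c * y ^ γ / γ) * g' x y ∂μ :=
          MeasureTheory.integral_const_mul A _
      _ = A * (-(g x 0) + c * ∫ y in Ioi (0:ℝ),
            Real.exp (-c * y ^ γ / γ) * y ^ (γ - 1) * g x y) := by rw [key]
      _ = -(A * g x 0) + c * (A * ∫ y,
            Real.exp (-c * y ^ γ / γ) * y ^ (γ - 1) * g x y ∂μ) := by ring
      _ = -(Real.exp (-v * x ^ η / η) * g x 0 * x ^ (η - 1))
          + c * ∫ y, Real.exp (-v * x ^ η / η - c * y ^ γ / γ)
              * g x y * x ^ (η - 1) * y ^ (γ - 1) ∂μ := by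
          rw [hfun2, MeasureTheory.integral_const_mul, hAdef]
          ring
  -- Assemble
  rw [step1, setIntegral_prod _ hint1, setIntegral_prod _ hint2]
  have hiter := integral_congr_ae hAE
  have hintInner2 : Integrable (fun x : ℝ => ∫ y, Real.exp (-v * x ^ η / η - c * y ^ γ / γ)
      * g x y * x ^ (η - 1) * y ^ (γ - 1) ∂μ) μ := hint2'.integral_prod_left
  have hsplit : (∫ x, (-(Real.exp (-v * x ^ η / η) * g x 0 * x ^ (η - 1))
        + c * ∫ y, Real.exp (-v * x ^ η / η - c * y ^ γ / γ)
            * g x y * x ^ (η - 1) * y ^ (γ - 1) ∂μ) ∂μ)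
      = -(∫ x, Real.exp (-v * x ^ η / η) * g x 0 * x ^ (η - 1) ∂μ)
        + c * ∫ x, (∫ y, Real.exp (-v * x ^ η / η - c * y ^ γ / γ)
            * g x y * x ^ (η - 1) * y ^ (γ - 1) ∂μ) ∂μ := by
    have h3neg : Integrable (fun x : ℝ =>
        -(Real.exp (-v * x ^ η / η) * g x 0 * x ^ (η - 1))) μ := hint3.neg
    rw [integral_add h3neg (hintInner2.const_mul c), integral_neg,
      MeasureTheory.integral_const_mul]
  rw [hiter, hsplit]
  rw [← hμdef]
  rw [hcdef]
  have hω0 : ω ≠ 0 := hω.ne'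
  ring
end

section
/- (CDLST of the second conformable x-derivative, Theorem 9 formula (8).) Let 0 < η, γ ≤ 1, v > 0, ω > 0, and let g : [0,∞) × (0,∞) → ℝ satisfy: for each y > 0, x ↦ g(x,y) is twice differentiable on (0,∞) and continuous at 0; for each y > 0, the first conformable derivative h(x,y) := x^{1−η}·∂g/∂x(x,y) extends continuously to x = 0 with value h(0,y); for each y > 0, e^{−v·x^η/η}·g(x,y) → 0 and e^{−v·x^η/η}·h(x,y) → 0 as x → ∞; and all integrands below are Lebesgue integrable on their domains. Then (1/ω)·∫₀^∞∫₀^∞ e^{−v·x^η/η − (1/ω)·y^γ/γ} · (x^{1−η}·∂h/∂x(x,y)) · x^{η−1}·y^{γ−1} dx dy = v²·Ψ(v,ω) − v·(1/ω)·∫₀^∞ e^{−(1/ω)·y^γ/γ}·g(0,y)·y^{γ−1} dy − (1/ω)·∫₀^∞ e^{−(1/ω)·y^γ/γ}·h(0,y)·y^{γ−1} dy, where Ψ(v,ω) is the CDLST of g. -/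
open Real MeasureTheory Set Filter Topology

lemma cdlst_ibp_aux (η v : ℝ) (hη0 : 0 < η) (f f' : ℝ → ℝ)
    (hd : ∀ x > (0:ℝ), HasDerivAt f (f' x) x)
    (hc : ContinuousWithinAt f (Ici 0) 0)
    (hlim : Tendsto (fun x => Real.exp (-v * x ^ η / η) * f x) atTop (𝓝 0))
    (hi1 : Integrable (fun x => Real.exp (-v * x ^ η / η) * f' x)
      (volume.restrict (Ioi 0)))
    (hi2 : Integrable (fun x => Real.exp (-v * x ^ η / η) * f x * x ^ (η - 1))
      (volume.restrict (Ioi 0))) :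
    ∫ x, Real.exp (-v * x ^ η / η) * f' x ∂(volume.restrict (Ioi 0))
      = v * (∫ x, Real.exp (-v * x ^ η / η) * f x * x ^ (η - 1)
          ∂(volume.restrict (Ioi 0))) - f 0 := by
  have hE0 : Real.exp (-v * (0:ℝ) ^ η / η) = 1 := by
    rw [Real.zero_rpow hη0.ne']; simp
  have key : ∫ x in Ioi (0:ℝ),
      (Real.exp (-v * x ^ η / η) * f' x
        - v * (Real.exp (-v * x ^ η / η) * f x * x ^ (η - 1)))
      = 0 - Real.exp (-v * (0:ℝ) ^ η / η) * f 0 := by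
    apply integral_Ioi_of_hasDerivAt_of_tendsto
      (f := fun x => Real.exp (-v * x ^ η / η) * f x)
      (f' := fun x => Real.exp (-v * x ^ η / η) * f' x
        - v * (Real.exp (-v * x ^ η / η) * f x * x ^ (η - 1)))
    · have h1 : ContinuousAt (fun x : ℝ => x ^ η) 0 :=
        Real.continuousAt_rpow_const 0 η (Or.inr hη0.le)
      exact ((Real.continuous_exp.continuousAt.comp
        (((continuousAt_const.mul h1).div_const η))).continuousWithinAt).mul hc
    · intro x hx
      have hx0 : (0:ℝ) < x := hx
      have h1 : HasDerivAt (fun x : ℝ => x ^ η) (η * x ^ (η - 1)) x :=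
        Real.hasDerivAt_rpow_const (Or.inl hx0.ne')
      have h2 : HasDerivAt (fun x : ℝ => -v * x ^ η / η) (-v * x ^ (η - 1)) x := by
        have := (h1.const_mul (-v)).div_const η
        refine this.congr_deriv ?_
        field_simp
      have := (h2.exp).mul (hd x hx0)
      refine this.congr_deriv ?_
      ring
    · exact hi1.sub (hi2.const_mul v)
    · exact hlim
  rw [integral_sub hi1 (hi2.const_mul v), integral_const_mul, hE0] at key
  linarith


/-- Theorem 9, formula (8): the CDLST of the second conformable x-derivative
D^η_x(D^η_x g) satisfies
L_x S_y[D^{2η}_x g](v,ω) = v²·Ψ(v,ω) − v·S_y[g(0,·)](ω) − S_y[(D^η_x g)(0,·)](ω),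
where h = D^η_x g = x^(1−η)·∂g/∂x is the first conformable derivative. -/
theorem cdlst_conformable_second_deriv_x
    (η γ : ℝ) (hη0 : 0 < η) (hη1 : η ≤ 1) (hγ0 : 0 < γ) (hγ1 : γ ≤ 1)
    (v ω : ℝ) (hv : 0 < v) (hω : 0 < ω)
    (g g' h h' : ℝ → ℝ → ℝ)
    (hderiv1 : ∀ y > (0 : ℝ), ∀ x > (0 : ℝ), HasDerivAt (fun t => g t y) (g' x y) x)
    (hh : ∀ y > (0 : ℝ), ∀ x > (0 : ℝ), h x y = x ^ (1 - η) * g' x y)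
    (hderiv2 : ∀ y > (0 : ℝ), ∀ x > (0 : ℝ), HasDerivAt (fun t => h t y) (h' x y) x)
    (hcontg : ∀ y > (0 : ℝ), ContinuousWithinAt (fun t => g t y) (Ici 0) 0)
    (hconth : ∀ y > (0 : ℝ), ContinuousWithinAt (fun t => h t y) (Ici 0) 0)
    (hlimg : ∀ y > (0 : ℝ),
      Tendsto (fun x : ℝ => Real.exp (-v * x ^ η / η) * g x y) atTop (𝓝 0))
    (hlimh : ∀ y > (0 : ℝ),
      Tendsto (fun x : ℝ => Real.exp (-v * x ^ η / η) * h x y) atTop (𝓝 0))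
    (hint1 : IntegrableOn (fun p : ℝ × ℝ =>
        Real.exp (-v * p.1 ^ η / η - (1 / ω) * p.2 ^ γ / γ)
          * (p.1 ^ (1 - η) * h' p.1 p.2) * p.1 ^ (η - 1) * p.2 ^ (γ - 1))
        (Ioi (0 : ℝ) ×ˢ Ioi (0 : ℝ)))
    (hint2 : IntegrableOn (fun p : ℝ × ℝ =>
        Real.exp (-v * p.1 ^ η / η - (1 / ω) * p.2 ^ γ / γ)
          * h p.1 p.2 * p.1 ^ (η - 1) * p.2 ^ (γ - 1)) (Ioi (0 : ℝ) ×ˢ Ioi (0 : ℝ)))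
    (hint3 : IntegrableOn (fun p : ℝ × ℝ =>
        Real.exp (-v * p.1 ^ η / η - (1 / ω) * p.2 ^ γ / γ)
          * g p.1 p.2 * p.1 ^ (η - 1) * p.2 ^ (γ - 1)) (Ioi (0 : ℝ) ×ˢ Ioi (0 : ℝ)))
    (hint4 : IntegrableOn (fun y : ℝ =>
        Real.exp (-(1 / ω) * y ^ γ / γ) * g 0 y * y ^ (γ - 1)) (Ioi (0 : ℝ)))
    (hint5 : IntegrableOn (fun y : ℝ =>
        Real.exp (-(1 / ω) * y ^ γ / γ) * h 0 y * y ^ (γ - 1)) (Ioi (0 : ℝ))) :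
    (1 / ω) * ∫ p in Ioi (0 : ℝ) ×ˢ Ioi (0 : ℝ),
        Real.exp (-v * p.1 ^ η / η - (1 / ω) * p.2 ^ γ / γ)
          * (p.1 ^ (1 - η) * h' p.1 p.2) * p.1 ^ (η - 1) * p.2 ^ (γ - 1)
      = v ^ 2 * ((1 / ω) * ∫ p in Ioi (0 : ℝ) ×ˢ Ioi (0 : ℝ),
            Real.exp (-v * p.1 ^ η / η - (1 / ω) * p.2 ^ γ / γ)
              * g p.1 p.2 * p.1 ^ (η - 1) * p.2 ^ (γ - 1))
        - v * ((1 / ω) * ∫ y in Ioi (0 : ℝ),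
            Real.exp (-(1 / ω) * y ^ γ / γ) * g 0 y * y ^ (γ - 1))
        - (1 / ω) * ∫ y in Ioi (0 : ℝ),
            Real.exp (-(1 / ω) * y ^ γ / γ) * h 0 y * y ^ (γ - 1) := by
  set μ : Measure ℝ := volume.restrict (Ioi 0) with hμ
  have hmeq : μ.prod μ = (volume : Measure (ℝ × ℝ)).restrict (Ioi 0 ×ˢ Ioi 0) := by
    rw [hμ, Measure.prod_restrict, Measure.volume_eq_prod]
  -- the three product integrands
  set F1 : ℝ × ℝ → ℝ := fun p =>
    Real.exp (-v * p.1 ^ η / η - (1 / ω) * p.2 ^ γ / γ)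
      * (p.1 ^ (1 - η) * h' p.1 p.2) * p.1 ^ (η - 1) * p.2 ^ (γ - 1) with hF1
  set F2 : ℝ × ℝ → ℝ := fun p =>
    Real.exp (-v * p.1 ^ η / η - (1 / ω) * p.2 ^ γ / γ)
      * h p.1 p.2 * p.1 ^ (η - 1) * p.2 ^ (γ - 1) with hF2
  set F3 : ℝ × ℝ → ℝ := fun p =>
    Real.exp (-v * p.1 ^ η / η - (1 / ω) * p.2 ^ γ / γ)
      * g p.1 p.2 * p.1 ^ (η - 1) * p.2 ^ (γ - 1) with hF3
  have hint1' : Integrable F1 (μ.prod μ) := by rw [hmeq]; exact hint1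
  have hint2' : Integrable F2 (μ.prod μ) := by rw [hmeq]; exact hint2
  have hint3' : Integrable F3 (μ.prod μ) := by rw [hmeq]; exact hint3
  have e1 : (∫ p in Ioi (0:ℝ) ×ˢ Ioi (0:ℝ), F1 p) = ∫ y, ∫ x, F1 (x, y) ∂μ ∂μ := by
    rw [← hmeq]; exact integral_prod_symm F1 hint1'
  have e3 : (∫ p in Ioi (0:ℝ) ×ˢ Ioi (0:ℝ), F3 p) = ∫ y, ∫ x, F3 (x, y) ∂μ ∂μ := by
    rw [← hmeq]; exact integral_prod_symm F3 hint3'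
  have hae1 := hint1'.prod_left_ae
  have hae2 := hint2'.prod_left_ae
  have hae3 := hint3'.prod_left_ae
  have haeY : ∀ᵐ y ∂μ, y ∈ Ioi (0:ℝ) := ae_restrict_mem measurableSet_Ioi
  have key : ∀ᵐ y ∂μ, (∫ x, F1 (x, y) ∂μ)
      = v ^ 2 * (∫ x, F3 (x, y) ∂μ)
        - v * (Real.exp (-(1 / ω) * y ^ γ / γ) * g 0 y * y ^ (γ - 1))
        - Real.exp (-(1 / ω) * y ^ γ / γ) * h 0 y * y ^ (γ - 1) := by
    filter_upwards [hae1, hae2, hae3, haeY] with y hy1 hy2 hy3 hy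
    have hy0 : (0:ℝ) < y := hy
    set K : ℝ := Real.exp (-(1 / ω) * y ^ γ / γ) * y ^ (γ - 1) with hK
    have hKpos : 0 < K := mul_pos (Real.exp_pos _) (Real.rpow_pos_of_pos hy0 _)
    have hsplit : ∀ x : ℝ, Real.exp (-v * x ^ η / η - (1 / ω) * y ^ γ / γ)
        = Real.exp (-v * x ^ η / η) * Real.exp (-(1 / ω) * y ^ γ / γ) := by
      intro x
      rw [← Real.exp_add]
      congr 1
      ring
    have hxc : ∀ x : ℝ, 0 < x → x ^ (1 - η) * x ^ (η - 1) = 1 := by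
      intro x hx
      rw [← Real.rpow_add hx]
      norm_num
    -- pointwise identifications on Ioi 0
    have eq1 : ∀ x ∈ Ioi (0:ℝ), F1 (x, y)
        = K * (Real.exp (-v * x ^ η / η) * h' x y) := by
      intro x hx
      simp only [hF1, hK]
      rw [hsplit x]
      linear_combination (Real.exp (-v * x ^ η / η) * Real.exp (-(1 / ω) * y ^ γ / γ)
        * h' x y * y ^ (γ - 1)) * hxc x hx
    have eq2 : ∀ x ∈ Ioi (0:ℝ), F2 (x, y)
        = K * (Real.exp (-v * x ^ η / η) * h x y * x ^ (η - 1)) := by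
      intro x hx
      simp only [hF2, hK]
      rw [hsplit x]
      ring
    have eq3 : ∀ x ∈ Ioi (0:ℝ), F3 (x, y)
        = K * (Real.exp (-v * x ^ η / η) * g x y * x ^ (η - 1)) := by
      intro x hx
      simp only [hF3, hK]
      rw [hsplit x]
      ring
    have haex : ∀ᵐ x ∂μ, x ∈ Ioi (0:ℝ) := ae_restrict_mem measurableSet_Ioi
    -- transfer integrability through the identifications
    have trans : ∀ (F : ℝ → ℝ) (G : ℝ → ℝ), Integrable F μ →
        (∀ x ∈ Ioi (0:ℝ), F x = K * G x) → Integrable G μ := by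
      intro F G hF heq
      have h1 : Integrable (fun x => K * G x) μ :=
        hF.congr (haex.mono fun x hx => heq x hx)
      have h2 := h1.const_mul K⁻¹
      refine h2.congr (Eventually.of_forall fun x => ?_)
      field_simp
    have ih' : Integrable (fun x => Real.exp (-v * x ^ η / η) * h' x y) μ :=
      trans _ _ hy1 eq1
    have ihx : Integrable (fun x => Real.exp (-v * x ^ η / η) * h x y * x ^ (η - 1)) μ :=
      trans _ _ hy2 eq2
    have igx : Integrable (fun x => Real.exp (-v * x ^ η / η) * g x y * x ^ (η - 1)) μ :=
      trans _ _ hy3 eq3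
    have eqg' : ∀ x ∈ Ioi (0:ℝ), g' x y = h x y * x ^ (η - 1) := by
      intro x hx
      have hx0 : (0:ℝ) < x := hx
      rw [hh y hy0 x hx0]
      linear_combination (-(g' x y)) * hxc x hx0
    have ig' : Integrable (fun x => Real.exp (-v * x ^ η / η) * g' x y) μ := by
      refine ihx.congr (haex.mono fun x hx => ?_)
      show Real.exp (-v * x ^ η / η) * h x y * x ^ (η - 1)
        = Real.exp (-v * x ^ η / η) * g' x y
      rw [eqg' x hx]
      ring
    -- first integration by parts (for h)
    have ibp1 := cdlst_ibp_aux η v hη0 (fun x => h x y) (fun x => h' x y)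
      (fun x hx => hderiv2 y hy0 x hx) (hconth y hy0) (hlimh y hy0) ih' ihx
    -- second integration by parts (for g)
    have ibp2 := cdlst_ibp_aux η v hη0 (fun x => g x y) (fun x => g' x y)
      (fun x hx => hderiv1 y hy0 x hx) (hcontg y hy0) (hlimg y hy0) ig' igx
    -- ∫ E h x^{η-1} = ∫ E g'
    have emid : (∫ x, Real.exp (-v * x ^ η / η) * h x y * x ^ (η - 1) ∂μ)
        = ∫ x, Real.exp (-v * x ^ η / η) * g' x y ∂μ := by
      refine integral_congr_ae (haex.mono fun x hx => ?_)
      show Real.exp (-v * x ^ η / η) * h x y * x ^ (η - 1)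
        = Real.exp (-v * x ^ η / η) * g' x y
      rw [eqg' x hx]
      ring
    -- rewrite the two slice integrals
    have eI1 : (∫ x, F1 (x, y) ∂μ)
        = K * ∫ x, Real.exp (-v * x ^ η / η) * h' x y ∂μ := by
      rw [hμ, setIntegral_congr_fun measurableSet_Ioi (fun x hx => eq1 x hx)]
      exact integral_const_mul K _
    have eI3 : (∫ x, F3 (x, y) ∂μ)
        = K * ∫ x, Real.exp (-v * x ^ η / η) * g x y * x ^ (η - 1) ∂μ := by
      rw [hμ, setIntegral_congr_fun measurableSet_Ioi (fun x hx => eq3 x hx)]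
      exact integral_const_mul K _
    rw [eI1, eI3, ibp1, emid, ibp2]
    simp only [hK]
    ring
  -- assemble the outer integral
  have hA : Integrable (fun y => ∫ x, F3 (x, y) ∂μ) μ := hint3'.integral_prod_right
  have hC : Integrable (fun y : ℝ =>
      Real.exp (-(1 / ω) * y ^ γ / γ) * g 0 y * y ^ (γ - 1)) μ := hint4
  have hD : Integrable (fun y : ℝ =>
      Real.exp (-(1 / ω) * y ^ γ / γ) * h 0 y * y ^ (γ - 1)) μ := hint5
  have E1 : ∫ y, (v ^ 2 * (∫ x, F3 (x, y) ∂μ)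
        - v * (Real.exp (-(1 / ω) * y ^ γ / γ) * g 0 y * y ^ (γ - 1))
        - Real.exp (-(1 / ω) * y ^ γ / γ) * h 0 y * y ^ (γ - 1)) ∂μ
      = (∫ y, (v ^ 2 * (∫ x, F3 (x, y) ∂μ)
          - v * (Real.exp (-(1 / ω) * y ^ γ / γ) * g 0 y * y ^ (γ - 1))) ∂μ)
        - ∫ y, Real.exp (-(1 / ω) * y ^ γ / γ) * h 0 y * y ^ (γ - 1) ∂μ :=
    integral_sub ((hA.const_mul (v ^ 2)).sub (hC.const_mul v)) hD
  have E2 : ∫ y, (v ^ 2 * (∫ x, F3 (x, y) ∂μ)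
        - v * (Real.exp (-(1 / ω) * y ^ γ / γ) * g 0 y * y ^ (γ - 1))) ∂μ
      = (∫ y, v ^ 2 * (∫ x, F3 (x, y) ∂μ) ∂μ)
        - ∫ y, v * (Real.exp (-(1 / ω) * y ^ γ / γ) * g 0 y * y ^ (γ - 1)) ∂μ :=
    integral_sub (hA.const_mul (v ^ 2)) (hC.const_mul v)
  rw [e1, e3, integral_congr_ae key, E1, E2, integral_const_mul, integral_const_mul]
  ring
end
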